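/- arXiv:2103.16071 — 3 statements merged into one kernel-verified Lean document; each statement's English description precedes it below -/
import Mathlib

section
/- Let x ∈ ℝᵈ not lie on any of the segments. Then Ẽ(x) ⊆ Ê(x) ⊆ Ẽ^{√n}(x), where Ẽ^{√n}(x) is the homothety of Ẽ(x) about x with ratio √n. -/
noncomputable section

open Metric Set MeasureTheory
open scoped InnerProductSpace Classical

variable {d n : ℕ}

/-- The capsule `C_s(x,r)` induced by a single segment `s = [a,b]` with unit
direction vector `v`.  If the nearest point of `s` to `x` is an endpoint, it is
the closed ball of radius `max r (dist x s)`; otherwise it is the intersection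
of the infinite closed cylinder of radius `max r (dist x s)` whose axis is the
line through `x` parallel to `v` with the closed ball of radius
`max r (min ‖x-a‖ ‖x-b‖)`. -/
def capsuleSeg (a b v x : EuclideanSpace ℝ (Fin d)) (r : ℝ) :
    Set (EuclideanSpace ℝ (Fin d)) :=
  if Metric.infDist x (segment ℝ a b) = min (dist x a) (dist x b) then
    Metric.closedBall x (max r (Metric.infDist x (segment ℝ a b)))
  else
    {y | ‖(y - x) - ⟪y - x, v⟫_ℝ • v‖ ≤ max r (Metric.infDist x (segment ℝ a b))} ∩
      Metric.closedBall x (max r (min (dist x a) (dist x b)))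

/-- The capsule `C(x,r)` of the family of segments `s i = [a i, b i]`. -/
def capsuleFam (a b v : Fin n → EuclideanSpace ℝ (Fin d))
    (x : EuclideanSpace ℝ (Fin d)) (r : ℝ) : Set (EuclideanSpace ℝ (Fin d)) :=
  ⋂ i, capsuleSeg (a i) (b i) (v i) x r

/-- Image of a set under the homothety (central scaling) centered at `x` with ratio `lam`. -/
def scaleAbout (x : EuclideanSpace ℝ (Fin d)) (lam : ℝ)
    (C : Set (EuclideanSpace ℝ (Fin d))) : Set (EuclideanSpace ℝ (Fin d)) :=
  (AffineMap.homothety x lam) '' C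

/-- Local feature size: the distance from `x` to its second-nearest segment. -/
def lfs (a b : Fin n → EuclideanSpace ℝ (Fin d)) (x : EuclideanSpace ℝ (Fin d)) : ℝ :=
  sInf {t | ∃ i j : Fin n, i < j ∧
    t = max (Metric.infDist x (segment ℝ (a i) (b i)))
            (Metric.infDist x (segment ℝ (a j) (b j)))}

/-- `D_i(x)`: half the squared distance from `x` to the segment `[a,b]`. -/
def Dseg (a b x : EuclideanSpace ℝ (Fin d)) : ℝ :=
  Metric.infDist x (segment ℝ a b) ^ 2 / 2

/-- `D•_i(x)`: half the squared distance from `x` to the nearest endpoint. -/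
def Dbullet (a b x : EuclideanSpace ℝ (Fin d)) : ℝ :=
  min (dist x a ^ 2) (dist x b ^ 2) / 2

/-- The quadratic form `w ↦ wᵀ H_i(x) w` of the local tensor
`H_i(x) = (1/D_i(x))(I - v vᵀ) + (1/D•_i(x)) v vᵀ`. -/
def tensorQ (a b v x w : EuclideanSpace ℝ (Fin d)) : ℝ :=
  (1 / Dseg a b x) * (‖w‖ ^ 2 - ⟪w, v⟫_ℝ ^ 2) + (1 / Dbullet a b x) * ⟪w, v⟫_ℝ ^ 2

/-- The local ellipsoid `E_i(x) = {y | ½ (y-x)ᵀ H_i(x) (y-x) ≤ 1}`. -/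
def localEllipsoid (a b v x : EuclideanSpace ℝ (Fin d)) :
    Set (EuclideanSpace ℝ (Fin d)) :=
  {y | tensorQ a b v x (y - x) / 2 ≤ 1}

/-- `Ê(x)`: the intersection of the local ellipsoids of all segments. -/
def hatE (a b v : Fin n → EuclideanSpace ℝ (Fin d)) (x : EuclideanSpace ℝ (Fin d)) :
    Set (EuclideanSpace ℝ (Fin d)) :=
  ⋂ i, localEllipsoid (a i) (b i) (v i) x

/-- `Ẽ(x)`: the ellipsoid of the blended tensor `H(x) = ∑ i, H_i(x)`. -/
def tildeE (a b v : Fin n → EuclideanSpace ℝ (Fin d)) (x : EuclideanSpace ℝ (Fin d)) :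
    Set (EuclideanSpace ℝ (Fin d)) :=
  {y | (∑ i, tensorQ (a i) (b i) (v i) x (y - x)) / 2 ≤ 1}

/-! Each local form `tensorQ` is positive semidefinite and quadratically homogeneous, so the
blended form dominates every local one, which gives `Ẽ ⊆ Ê`; and on `Ê` every local form is at
most `2`, so the blended form is at most `2n`, and shrinking by `√n` brings a point of `Ê` into `Ẽ`.
Where `D_i(x)` or `D•_i(x)` vanishes, the convention `1 / 0 = 0` keeps all of this valid. -/

lemma Dseg_nonneg (a b x : EuclideanSpace ℝ (Fin d)) : 0 ≤ Dseg a b x := by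
  unfold Dseg; positivity

lemma Dbullet_nonneg (a b x : EuclideanSpace ℝ (Fin d)) : 0 ≤ Dbullet a b x := by
  unfold Dbullet; positivity

lemma real_inner_sq_le_norm_sq {E : Type*} [NormedAddCommGroup E] [InnerProductSpace ℝ E]
    {v : E} (hv : ‖v‖ ≤ 1) (w : E) : ⟪w, v⟫_ℝ ^ 2 ≤ ‖w‖ ^ 2 :=
  calc ⟪w, v⟫_ℝ ^ 2 = |⟪w, v⟫_ℝ| ^ 2 := (sq_abs _).symm
    _ ≤ (‖w‖ * ‖v‖) ^ 2 := by gcongr; exact abs_real_inner_le_norm w v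
    _ ≤ ‖w‖ ^ 2 := by
      rw [mul_pow]
      exact mul_le_of_le_one_right (sq_nonneg _) (pow_le_one₀ (norm_nonneg v) hv)

lemma tensorQ_nonneg (a b x w : EuclideanSpace ℝ (Fin d)) {v : EuclideanSpace ℝ (Fin d)}
    (hv : ‖v‖ ≤ 1) : 0 ≤ tensorQ a b v x w := by
  have hD := Dseg_nonneg a b x
  have hDb := Dbullet_nonneg a b x
  have hperp : 0 ≤ ‖w‖ ^ 2 - ⟪w, v⟫_ℝ ^ 2 := sub_nonneg.mpr (real_inner_sq_le_norm_sq hv w)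
  unfold tensorQ
  positivity

lemma tensorQ_smul (a b v x w : EuclideanSpace ℝ (Fin d)) (c : ℝ) :
    tensorQ a b v x (c • w) = c ^ 2 * tensorQ a b v x w := by
  simp only [tensorQ, norm_smul, real_inner_smul_left, mul_pow, Real.norm_eq_abs, sq_abs]
  ring

lemma mem_scaleAbout_iff {x y : EuclideanSpace ℝ (Fin d)} {c : ℝ} (hc : c ≠ 0)
    {C : Set (EuclideanSpace ℝ (Fin d))} :
    y ∈ scaleAbout x c C ↔ x + c⁻¹ • (y - x) ∈ C := by
  have hinv : ∀ z : EuclideanSpace ℝ (Fin d),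
      AffineMap.homothety x c z = y ↔ z = x + c⁻¹ • (y - x) := by
    intro z
    simp only [AffineMap.homothety_apply, vsub_eq_sub, vadd_eq_add]
    constructor
    · rintro rfl
      rw [add_sub_cancel_right, smul_smul, inv_mul_cancel₀ hc, one_smul, add_sub_cancel]
    · rintro rfl
      rw [add_sub_cancel_left, smul_smul, mul_inv_cancel₀ hc, one_smul, sub_add_cancel]
  simp only [scaleAbout, Set.mem_image, hinv, exists_eq_right]

section Ellipsoids

variable (a b v : Fin n → EuclideanSpace ℝ (Fin d)) (x : EuclideanSpace ℝ (Fin d))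

lemma tildeE_subset_hatE (hv : ∀ i, ‖v i‖ ≤ 1) : tildeE a b v x ⊆ hatE a b v x := by
  intro y hy
  simp only [hatE, mem_iInter, localEllipsoid, mem_ofPred_eq]
  intro i
  have hle : tensorQ (a i) (b i) (v i) x (y - x) ≤ ∑ j, tensorQ (a j) (b j) (v j) x (y - x) :=
    Finset.single_le_sum (fun j _ => tensorQ_nonneg _ _ _ _ (hv j)) (Finset.mem_univ i)
  exact (div_le_div_of_nonneg_right hle zero_le_two).trans hy

lemma sum_tensorQ_le_of_mem_hatE {y : EuclideanSpace ℝ (Fin d)} (hy : y ∈ hatE a b v x) :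
    ∑ i, tensorQ (a i) (b i) (v i) x (y - x) ≤ 2 * n := by
  simp only [hatE, mem_iInter, localEllipsoid, mem_ofPred_eq] at hy
  calc ∑ i, tensorQ (a i) (b i) (v i) x (y - x) ≤ ∑ _i : Fin n, (2 : ℝ) :=
        Finset.sum_le_sum fun i _ => by linarith [hy i]
    _ = 2 * n := by simp [mul_comm]

lemma hatE_subset_scaleAbout_sqrt_tildeE (hn : 1 ≤ n) :
    hatE a b v x ⊆ scaleAbout x (Real.sqrt n) (tildeE a b v x) := by
  have hn₀ : (0 : ℝ) < n := by exact_mod_cast hn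
  intro y hy
  rw [mem_scaleAbout_iff (Real.sqrt_pos.mpr hn₀).ne']
  simp only [tildeE, mem_ofPred_eq, add_sub_cancel_left, tensorQ_smul, ← Finset.mul_sum,
    inv_pow, Real.sq_sqrt hn₀.le]
  rw [div_le_one zero_lt_two, inv_mul_le_iff₀ hn₀, mul_comm]
  exact sum_tensorQ_le_of_mem_hatE a b v x hy

end Ellipsoids

theorem tildeE_subset_hatE_subset_scaled_tildeE_general {d n : ℕ} (hn : 1 ≤ n)
    (a b v : Fin n → EuclideanSpace ℝ (Fin d))
    (hv : ∀ i, ‖v i‖ = 1)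
    (x : EuclideanSpace ℝ (Fin d)) :
    tildeE a b v x ⊆ hatE a b v x ∧
      hatE a b v x ⊆ scaleAbout x (Real.sqrt n) (tildeE a b v x) :=
  ⟨tildeE_subset_hatE a b v x fun i => (hv i).le, hatE_subset_scaleAbout_sqrt_tildeE a b v x hn⟩

/-- For `x` not on any segment,
`Ẽ(x) ⊆ Ê(x) ⊆ Ẽ^{√n}(x)`. -/
theorem tildeE_subset_hatE_subset_scaled_tildeE {d n : ℕ} (hd : 1 ≤ d) (hn : 1 ≤ n)
    (a b v : Fin n → EuclideanSpace ℝ (Fin d))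
    (hab : ∀ i, a i ≠ b i)
    (hv : ∀ i, ‖v i‖ = 1)
    (hdir : ∀ i, b i - a i = ‖b i - a i‖ • v i)
    (hdisj : ∀ i j, i ≠ j → Disjoint (segment ℝ (a i) (b i)) (segment ℝ (a j) (b j)))
    (x : EuclideanSpace ℝ (Fin d)) (hx : ∀ i, x ∉ segment ℝ (a i) (b i)) :
    tildeE a b v x ⊆ hatE a b v x ∧
      hatE a b v x ⊆ scaleAbout x (Real.sqrt n) (tildeE a b v x) :=
  tildeE_subset_hatE_subset_scaled_tildeE_general hn a b v hv x
end
end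

section
/- (Expansion-Containment) Let r > 0 and 0 < λ < 1, and set α = (3+λ)/(1−λ). For any x, y ∈ ℝᵈ, if C^λ(x, r) ∩ C^λ(y, r) ≠ ∅, then C^λ(y, r) ⊆ C^{αλ}(x, r). -/
noncomputable section

open Metric Set MeasureTheory
open scoped InnerProductSpace Classical

variable {d n : ℕ}

/-!
For a segment `s` with direction `v`, let `P` be the projection orthogonal to `v`,
`R x = max r d(x,s)` and `Rₑ x = max r (distance from x to the nearer endpoint of s)`. In both
cases of the definition, `C_s(x,r) = {p | ‖P(p-x)‖ ≤ R x ∧ ‖p-x‖ ≤ Rₑ x}` (in the ball case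
`R x = Rₑ x` and `P` is a contraction), so `C_s^μ(x,r)` is the same set with radii `μ R x`,
`μ Rₑ x`, and it suffices to treat one segment.

Take `z ∈ C_s^λ(x,r) ∩ C_s^λ(y,r)`. Since `Rₑ` is 1-Lipschitz and `|x-y| ≤ λ Rₑ x + λ Rₑ y`,
`(1-λ) Rₑ y ≤ (1+λ) Rₑ x`. The same holds for `R`, because `d(y,s) ≤ d(z,s) + λ R y` and
`d(z,s) ≤ (1+λ) R x`. This last bound is the geometric heart: when the foot of `x` is interior to
`s`, `z` may move along `s` by more than `λ R x`, but by Pythagoras the excess is paid for by the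
distance from the foot of `x` to the nearer endpoint, which is what `Rₑ x` exceeds `R x` by.
Finally, for `w ∈ C_s^λ(y,r)` the triangle inequality through `y` and `z` gives
`‖P(w-x)‖ ≤ 2λ R y + λ R x ≤ (3+λ)/(1-λ) · λ R x`, and likewise `‖w-x‖ ≤ (3+λ)/(1-λ) · λ Rₑ x`.
-/

section OrthComponent

variable {E : Type*} [NormedAddCommGroup E] [InnerProductSpace ℝ E] {v : E}

def orthComponent (v : E) : E →ₗ[ℝ] E :=
  LinearMap.id - (innerₗ E v).smulRight v

@[simp]
lemma orthComponent_apply (v w : E) : orthComponent v w = w - ⟪w, v⟫_ℝ • v := by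
  simp [orthComponent, real_inner_comm]

lemma norm_sub_smul_sq (hv : ‖v‖ = 1) (w : E) (t : ℝ) :
    ‖w - t • v‖ ^ 2 = ‖orthComponent v w‖ ^ 2 + (⟪w, v⟫_ℝ - t) ^ 2 := by
  have horth : ⟪orthComponent v w, v⟫_ℝ = 0 := by
    simp [inner_sub_left, real_inner_smul_left, hv]
  have hsplit : w - t • v = orthComponent v w + (⟪w, v⟫_ℝ - t) • v := by
    simp only [orthComponent_apply, sub_smul]; abel
  rw [hsplit, norm_add_sq_real, real_inner_smul_right, horth, norm_smul, hv, Real.norm_eq_abs,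
    mul_one, sq_abs, mul_zero, mul_zero, add_zero]

lemma norm_sq_eq_norm_orthComponent_sq_add (hv : ‖v‖ = 1) (w : E) :
    ‖w‖ ^ 2 = ‖orthComponent v w‖ ^ 2 + ⟪w, v⟫_ℝ ^ 2 := by
  simpa using norm_sub_smul_sq hv w 0

lemma norm_orthComponent_le (hv : ‖v‖ = 1) (w : E) : ‖orthComponent v w‖ ≤ ‖w‖ := by
  rw [← sq_le_sq₀ (norm_nonneg _) (norm_nonneg _), norm_sq_eq_norm_orthComponent_sq_add hv w]
  exact le_add_of_nonneg_right (sq_nonneg _)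

lemma dist_add_smul_sq (hv : ‖v‖ = 1) (u a : E) (t : ℝ) :
    dist u (a + t • v) ^ 2 = ‖orthComponent v (u - a)‖ ^ 2 + (⟪u - a, v⟫_ℝ - t) ^ 2 := by
  rw [dist_eq_norm, ← sub_sub, norm_sub_smul_sq hv]

end OrthComponent

lemma norm_map_sub_le_add_add {E F : Type*} [AddCommGroup E] [SeminormedAddCommGroup F]
    (T : E →+ F) (w x y z : E) :
    ‖T (w - x)‖ ≤ ‖T (w - y)‖ + ‖T (z - y)‖ + ‖T (z - x)‖ := by
  have h : T (w - x) = T (w - y) - T (z - y) + T (z - x) := by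
    simp only [map_sub]; abel
  rw [h]
  exact (norm_add_le _ _).trans (by gcongr; exact norm_sub_le _ _)

section Segment

variable {E : Type*} [NormedAddCommGroup E] [InnerProductSpace ℝ E] {a b v : E}

lemma segment_eq_image_Icc (hdir : b - a = ‖b - a‖ • v) :
    segment ℝ a b = (fun t : ℝ => a + t • v) '' Icc 0 ‖b - a‖ := by
  have hline : (fun t : ℝ => a + t • v) = AffineMap.lineMap a (a + v) := by
    ext t; simp [AffineMap.lineMap_apply, add_comm]
  rw [hline, ← segment_eq_Icc (norm_nonneg _), image_segment]
  simp [AffineMap.lineMap_apply, ← hdir, add_comm]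

lemma sq_sub_clamp_le {τ t L : ℝ} (ht : t ∈ Icc 0 L) :
    (τ - max 0 (min τ L)) ^ 2 ≤ (τ - t) ^ 2 := by
  obtain ⟨ht0, htL⟩ := ht
  simp only [min_def, max_def]
  split_ifs <;> nlinarith

lemma sq_sub_clamp_add_sq_min_le {s t L : ℝ} (hs : s ∈ Icc 0 L) (ht : t ∉ Icc 0 L) :
    (t - max 0 (min t L)) ^ 2 + min s (L - s) ^ 2 ≤ (t - s) ^ 2 := by
  obtain ⟨hs0, hsL⟩ := hs
  rw [mem_Icc, not_and_or, not_le, not_le] at ht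
  simp only [min_def, max_def]
  split_ifs <;> rcases ht with ht | ht <;> nlinarith

lemma infDist_segment_eq (hv : ‖v‖ = 1) (hdir : b - a = ‖b - a‖ • v) (u : E) :
    infDist u (segment ℝ a b) = dist u (a + max 0 (min ⟪u - a, v⟫_ℝ ‖b - a‖) • v) := by
  rw [segment_eq_image_Icc hdir]
  refine le_antisymm (infDist_le_dist_of_mem ⟨_, ⟨le_max_left _ _,
    max_le (norm_nonneg _) (min_le_right _ _)⟩, rfl⟩) ?_
  refine (le_infDist ((nonempty_Icc.2 (norm_nonneg _)).image _)).2 ?_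
  rintro _ ⟨t, ht, rfl⟩
  rw [← sq_le_sq₀ dist_nonneg dist_nonneg, dist_add_smul_sq hv, dist_add_smul_sq hv]
  exact add_le_add le_rfl (sq_sub_clamp_le ht)

lemma infDist_segment_sq (hv : ‖v‖ = 1) (hdir : b - a = ‖b - a‖ • v) (u : E) :
    infDist u (segment ℝ a b) ^ 2 = ‖orthComponent v (u - a)‖ ^ 2 +
      (⟪u - a, v⟫_ℝ - max 0 (min ⟪u - a, v⟫_ℝ ‖b - a‖)) ^ 2 := by
  rw [infDist_segment_eq hv hdir, dist_add_smul_sq hv]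

lemma norm_orthComponent_le_infDist (hv : ‖v‖ = 1) (hdir : b - a = ‖b - a‖ • v) (u : E) :
    ‖orthComponent v (u - a)‖ ≤ infDist u (segment ℝ a b) := by
  rw [← sq_le_sq₀ (norm_nonneg _) infDist_nonneg, infDist_segment_sq hv hdir]
  exact le_add_of_nonneg_right (sq_nonneg _)

lemma infDist_segment_le_min (u : E) :
    infDist u (segment ℝ a b) ≤ min (dist u a) (dist u b) :=
  le_min (infDist_le_dist_of_mem (left_mem_segment ℝ a b))
    (infDist_le_dist_of_mem (right_mem_segment ℝ a b))

lemma infDist_segment_eq_min_or (hv : ‖v‖ = 1) (hdir : b - a = ‖b - a‖ • v) (u : E) :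
    infDist u (segment ℝ a b) = min (dist u a) (dist u b) ∨
      (⟪u - a, v⟫_ℝ ∈ Icc 0 ‖b - a‖ ∧
        infDist u (segment ℝ a b) = ‖orthComponent v (u - a)‖) := by
  have hnearest := infDist_segment_eq hv hdir u
  rcases le_total ⟪u - a, v⟫_ℝ 0 with hτ | hτ
  · left
    rw [max_eq_left ((min_le_left _ _).trans hτ), zero_smul, add_zero] at hnearest
    exact le_antisymm (infDist_segment_le_min u) (hnearest ▸ min_le_left _ _)
  rcases le_total ‖b - a‖ ⟪u - a, v⟫_ℝ with hτL | hτL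
  · left
    rw [min_eq_right hτL, max_eq_right (norm_nonneg _), ← hdir, add_sub_cancel] at hnearest
    exact le_antisymm (infDist_segment_le_min u) (hnearest ▸ min_le_right _ _)
  · refine Or.inr ⟨⟨hτ, hτL⟩, ?_⟩
    rw [← sq_eq_sq₀ infDist_nonneg (norm_nonneg _), infDist_segment_sq hv hdir,
      min_eq_left hτL, max_eq_right hτ, sub_self]
    ring

end Segment

section Radii

def capsuleBallRadius {X : Type*} [PseudoMetricSpace X] (a b x : X) (r : ℝ) : ℝ :=
  max r (min (dist x a) (dist x b))

lemma capsuleBallRadius_le_add_dist {X : Type*} [PseudoMetricSpace X] {a b : X} {r : ℝ}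
    (x y : X) : capsuleBallRadius a b y r ≤ capsuleBallRadius a b x r + dist y x := by
  have hmin : min (dist y a) (dist y b) ≤ min (dist x a) (dist x b) + dist y x := by
    rw [← min_add_add_right]
    exact min_le_min (by linarith [dist_triangle y x a]) (by linarith [dist_triangle y x b])
  exact max_le ((le_max_left _ _).trans (le_add_of_nonneg_right dist_nonneg))
    (hmin.trans (by gcongr; exact le_max_right _ _))

variable {E : Type*} [NormedAddCommGroup E] [InnerProductSpace ℝ E]

def capsuleCylRadius (a b x : E) (r : ℝ) : ℝ :=
  max r (infDist x (segment ℝ a b))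

variable {a b v x : E} {r : ℝ}

lemma infDist_le_capsuleCylRadius : infDist x (segment ℝ a b) ≤ capsuleCylRadius a b x r :=
  le_max_right _ _

lemma capsuleCylRadius_nonneg : 0 ≤ capsuleCylRadius a b x r :=
  infDist_nonneg.trans infDist_le_capsuleCylRadius

lemma capsuleBallRadius_eq_capsuleCylRadius
    (hx : infDist x (segment ℝ a b) = min (dist x a) (dist x b)) :
    capsuleBallRadius a b x r = capsuleCylRadius a b x r := by
  rw [capsuleBallRadius, capsuleCylRadius, hx]

lemma capsuleBallRadius_sq_le (hv : ‖v‖ = 1) (hdir : b - a = ‖b - a‖ • v)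
    (hτ : ⟪x - a, v⟫_ℝ ∈ Icc 0 ‖b - a‖)
    (hx : infDist x (segment ℝ a b) = ‖orthComponent v (x - a)‖) :
    capsuleBallRadius a b x r ^ 2 ≤
      capsuleCylRadius a b x r ^ 2 + min ⟪x - a, v⟫_ℝ (‖b - a‖ - ⟪x - a, v⟫_ℝ) ^ 2 := by
  have hb : b = a + ‖b - a‖ • v := by rw [← hdir]; abel
  have hda := dist_add_smul_sq hv x a 0
  have hdb := dist_add_smul_sq hv x a ‖b - a‖
  rw [← hb] at hdb
  rw [zero_smul, add_zero] at hda
  have hQ : ‖orthComponent v (x - a)‖ ≤ capsuleCylRadius a b x r :=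
    hx ▸ infDist_le_capsuleCylRadius
  have hrR : r ≤ capsuleCylRadius a b x r := le_max_left _ _
  obtain ⟨hτ0, hτL⟩ := hτ
  have := norm_nonneg (orthComponent v (x - a))
  have := dist_nonneg (x := x) (y := a)
  have := dist_nonneg (x := x) (y := b)
  simp only [capsuleBallRadius, max_def, min_def] at *
  split_ifs at * <;> nlinarith

end Radii

lemma expansion_bound {lam A B : ℝ} (hlam0 : 0 ≤ lam) (hlam1 : lam < 1)
    (h : B ≤ (1 + lam) * A + lam * B) :
    lam * B + lam * B + lam * A ≤ (3 + lam) / (1 - lam) * lam * A := by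
  rw [div_mul_eq_mul_div, div_mul_eq_mul_div, le_div_iff₀ (sub_pos.2 hlam1)]
  nlinarith [mul_le_mul_of_nonneg_left h hlam0]

section Capsule

variable {d : ℕ} {a b v x y z : EuclideanSpace ℝ (Fin d)} {r μ lam : ℝ}

lemma capsuleSeg_eq (hv : ‖v‖ = 1) :
    capsuleSeg a b v x r = {p | ‖orthComponent v (p - x)‖ ≤ capsuleCylRadius a b x r ∧
      ‖p - x‖ ≤ capsuleBallRadius a b x r} := by
  unfold capsuleSeg
  split_ifs with hx
  · ext p
    rw [capsuleBallRadius_eq_capsuleCylRadius hx]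
    simp only [mem_closedBall, dist_eq_norm, mem_ofPred_eq]
    exact ⟨fun hp => ⟨(norm_orthComponent_le hv _).trans hp, hp⟩, And.right⟩
  · ext p
    simp [capsuleCylRadius, capsuleBallRadius, dist_eq_norm]

lemma scaleAbout_eq_preimage (hμ : μ ≠ 0) (C : Set (EuclideanSpace ℝ (Fin d))) :
    scaleAbout x μ C = AffineMap.homothety x μ⁻¹ ⁻¹' C :=
  congrFun (image_eq_preimage_of_inverse (f := AffineMap.homothety x μ)
    (g := AffineMap.homothety x μ⁻¹)
    (fun p => by simp [← AffineMap.homothety_mul_apply, inv_mul_cancel₀ hμ])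
    (fun p => by simp [← AffineMap.homothety_mul_apply, mul_inv_cancel₀ hμ])) C

lemma mem_scaleAbout_capsuleSeg (hv : ‖v‖ = 1) (hμ : 0 < μ) {p : EuclideanSpace ℝ (Fin d)} :
    p ∈ scaleAbout x μ (capsuleSeg a b v x r) ↔
      ‖orthComponent v (p - x)‖ ≤ μ * capsuleCylRadius a b x r ∧
        ‖p - x‖ ≤ μ * capsuleBallRadius a b x r := by
  rw [scaleAbout_eq_preimage hμ.ne', mem_preimage, capsuleSeg_eq hv, mem_ofPred_eq,
    AffineMap.homothety_apply, vsub_eq_sub, vadd_eq_add, add_sub_cancel_right, map_smul,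
    norm_smul, norm_smul, Real.norm_eq_abs, abs_of_pos (inv_pos.2 hμ),
    inv_mul_le_iff₀ hμ, inv_mul_le_iff₀ hμ]

lemma scaleAbout_capsuleFam {n : ℕ} {a b v : Fin n → EuclideanSpace ℝ (Fin d)} (hμ : μ ≠ 0) :
    scaleAbout x μ (capsuleFam a b v x r) =
      ⋂ i, scaleAbout x μ (capsuleSeg (a i) (b i) (v i) x r) := by
  simp only [scaleAbout_eq_preimage hμ, capsuleFam, preimage_iInter]

lemma infDist_le_of_mem_scaleAbout_capsuleSeg (hv : ‖v‖ = 1) (hdir : b - a = ‖b - a‖ • v)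
    (hlam0 : 0 < lam) (hlam1 : lam ≤ 1) (hz : z ∈ scaleAbout x lam (capsuleSeg a b v x r)) :
    infDist z (segment ℝ a b) ≤ (1 + lam) * capsuleCylRadius a b x r := by
  rw [mem_scaleAbout_capsuleSeg hv hlam0] at hz
  obtain ⟨hperp, hball⟩ := hz
  rcases infDist_segment_eq_min_or hv hdir x with hx | ⟨hτ, hx⟩
  · rw [capsuleBallRadius_eq_capsuleCylRadius hx] at hball
    calc infDist z (segment ℝ a b) ≤ infDist x (segment ℝ a b) + dist z x :=
          infDist_le_infDist_add_dist
      _ ≤ capsuleCylRadius a b x r + lam * capsuleCylRadius a b x r := by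
          rw [dist_eq_norm]; exact add_le_add infDist_le_capsuleCylRadius hball
      _ = (1 + lam) * capsuleCylRadius a b x r := by ring
  · have hR := capsuleBallRadius_sq_le (r := r) hv hdir hτ hx
    have hsplit : ‖z - x‖ ^ 2 =
        ‖orthComponent v (z - x)‖ ^ 2 + (⟪z - a, v⟫_ℝ - ⟪x - a, v⟫_ℝ) ^ 2 := by
      rw [norm_sq_eq_norm_orthComponent_sq_add hv, ← inner_sub_left, sub_sub_sub_cancel_right]
    have hQ : ‖orthComponent v (z - a)‖ ≤
        ‖orthComponent v (x - a)‖ + ‖orthComponent v (z - x)‖ := by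
      rw [← sub_add_sub_cancel z x a, map_add, add_comm]; exact norm_add_le _ _
    have hdz := infDist_segment_sq hv hdir z
    have hQx : ‖orthComponent v (x - a)‖ ≤ capsuleCylRadius a b x r :=
      hx ▸ infDist_le_capsuleCylRadius
    rw [← sq_le_sq₀ infDist_nonneg (mul_nonneg (by linarith) capsuleCylRadius_nonneg)]
    by_cases hτz : ⟪z - a, v⟫_ℝ ∈ Icc 0 ‖b - a‖
    · rw [min_eq_left hτz.2, max_eq_right hτz.1, sub_self, zero_pow two_ne_zero, add_zero]
        at hdz
      rw [hdz]
      exact pow_le_pow_left₀ (norm_nonneg _) (by linarith) 2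
    · -- `z` projects beyond an endpoint: its overshoot past that endpoint and the distance from
      -- the foot of `x` to the nearer endpoint together fit in the axial part of `z - x`.
      have hgeom := sq_sub_clamp_add_sq_min_le hτ hτz
      have hball2 := pow_le_pow_left₀ (norm_nonneg _) hball 2
      have hQz2 := pow_le_pow_left₀ (norm_nonneg _) hQ 2
      have hlamR := mul_le_mul_of_nonneg_left hR (sq_nonneg lam)
      have hlamh : lam ^ 2 * min ⟪x - a, v⟫_ℝ (‖b - a‖ - ⟪x - a, v⟫_ℝ) ^ 2 ≤
          min ⟪x - a, v⟫_ℝ (‖b - a‖ - ⟪x - a, v⟫_ℝ) ^ 2 :=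
        mul_le_of_le_one_left (sq_nonneg _) (pow_le_one₀ hlam0.le hlam1)
      have hcross := mul_le_mul hQx hperp (norm_nonneg _) capsuleCylRadius_nonneg
      have hQx2 := pow_le_pow_left₀ (norm_nonneg _) hQx 2
      rw [hdz]
      nlinarith

lemma infDist_le_add_of_mem_scaleAbout_capsuleSeg (hv : ‖v‖ = 1) (hdir : b - a = ‖b - a‖ • v)
    (hlam0 : 0 < lam) (hz : z ∈ scaleAbout y lam (capsuleSeg a b v y r)) :
    infDist y (segment ℝ a b) ≤ infDist z (segment ℝ a b) + lam * capsuleCylRadius a b y r := by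
  rw [mem_scaleAbout_capsuleSeg hv hlam0] at hz
  obtain ⟨hperp, hball⟩ := hz
  rcases infDist_segment_eq_min_or hv hdir y with hy | ⟨-, hy⟩
  · rw [capsuleBallRadius_eq_capsuleCylRadius hy, ← dist_eq_norm, dist_comm] at hball
    exact infDist_le_infDist_add_dist.trans (by gcongr)
  · calc infDist y (segment ℝ a b) = ‖orthComponent v (z - a) - orthComponent v (z - y)‖ := by
          rw [hy, ← map_sub, sub_sub_sub_cancel_left]
      _ ≤ _ := (norm_sub_le _ _).trans
          (add_le_add (norm_orthComponent_le_infDist hv hdir z) hperp)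

lemma capsuleCylRadius_le_of_mem_inter (hv : ‖v‖ = 1) (hdir : b - a = ‖b - a‖ • v)
    (hlam0 : 0 < lam) (hlam1 : lam ≤ 1) (hzx : z ∈ scaleAbout x lam (capsuleSeg a b v x r))
    (hzy : z ∈ scaleAbout y lam (capsuleSeg a b v y r)) :
    capsuleCylRadius a b y r ≤
      (1 + lam) * capsuleCylRadius a b x r + lam * capsuleCylRadius a b y r := by
  have hx := infDist_le_of_mem_scaleAbout_capsuleSeg hv hdir hlam0 hlam1 hzx
  have hy := infDist_le_add_of_mem_scaleAbout_capsuleSeg hv hdir hlam0 hzy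
  have hRx : r ≤ capsuleCylRadius a b x r := le_max_left _ _
  have hRx0 := mul_nonneg hlam0.le (capsuleCylRadius_nonneg (a := a) (b := b) (x := x) (r := r))
  have hRy0 := mul_nonneg hlam0.le (capsuleCylRadius_nonneg (a := a) (b := b) (x := y) (r := r))
  exact max_le (by linarith) (by linarith)

lemma capsuleBallRadius_le_of_mem_inter (hv : ‖v‖ = 1) (hlam0 : 0 < lam)
    (hzx : z ∈ scaleAbout x lam (capsuleSeg a b v x r))
    (hzy : z ∈ scaleAbout y lam (capsuleSeg a b v y r)) :
    capsuleBallRadius a b y r ≤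
      (1 + lam) * capsuleBallRadius a b x r + lam * capsuleBallRadius a b y r := by
  rw [mem_scaleAbout_capsuleSeg hv hlam0] at hzx hzy
  have hxy : dist y x ≤ lam * capsuleBallRadius a b y r + lam * capsuleBallRadius a b x r := by
    calc dist y x ≤ dist z y + dist z x := dist_triangle_left _ _ _
      _ ≤ _ := by rw [dist_eq_norm, dist_eq_norm]; exact add_le_add hzy.2 hzx.2
  linarith [capsuleBallRadius_le_add_dist (a := a) (b := b) (r := r) x y]

lemma scaleAbout_capsuleSeg_subset (hv : ‖v‖ = 1) (hdir : b - a = ‖b - a‖ • v)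
    (hlam0 : 0 < lam) (hlam1 : lam < 1) (hzx : z ∈ scaleAbout x lam (capsuleSeg a b v x r))
    (hzy : z ∈ scaleAbout y lam (capsuleSeg a b v y r)) :
    scaleAbout y lam (capsuleSeg a b v y r) ⊆
      scaleAbout x ((3 + lam) / (1 - lam) * lam) (capsuleSeg a b v x r) := by
  have hcyl := expansion_bound hlam0.le hlam1
    (capsuleCylRadius_le_of_mem_inter hv hdir hlam0 hlam1.le hzx hzy)
  have hball := expansion_bound hlam0.le hlam1
    (capsuleBallRadius_le_of_mem_inter hv hlam0 hzx hzy)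
  intro w hw
  rw [mem_scaleAbout_capsuleSeg hv hlam0] at hzx hzy hw
  rw [mem_scaleAbout_capsuleSeg hv (by have := sub_pos.2 hlam1; positivity)]
  constructor
  · calc _ ≤ _ := norm_map_sub_le_add_add (orthComponent v).toAddMonoidHom w x y z
      _ ≤ _ := add_le_add (add_le_add hw.1 hzy.1) hzx.1
      _ ≤ _ := hcyl
  · calc _ ≤ _ := by simpa using norm_map_sub_le_add_add (AddMonoidHom.id _) w x y z
      _ ≤ _ := add_le_add (add_le_add hw.2 hzy.2) hzx.2
      _ ≤ _ := hball

end Capsule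

theorem capsule_expansion_containment_general {d n : ℕ}
    (a b v : Fin n → EuclideanSpace ℝ (Fin d))
    (hv : ∀ i, ‖v i‖ = 1)
    (hdir : ∀ i, b i - a i = ‖b i - a i‖ • v i)
    (r : ℝ) (lam : ℝ) (hlam0 : 0 < lam) (hlam1 : lam < 1)
    (x y : EuclideanSpace ℝ (Fin d))
    (hmeet : (scaleAbout x lam (capsuleFam a b v x r) ∩
        scaleAbout y lam (capsuleFam a b v y r)).Nonempty) :
    scaleAbout y lam (capsuleFam a b v y r) ⊆
      scaleAbout x ((3 + lam) / (1 - lam) * lam) (capsuleFam a b v x r) := by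
  obtain ⟨z, hzx, hzy⟩ := hmeet
  have hα : (3 + lam) / (1 - lam) * lam ≠ 0 := by have := sub_pos.2 hlam1; positivity
  rw [scaleAbout_capsuleFam hlam0.ne', mem_iInter] at hzx hzy
  rw [scaleAbout_capsuleFam hlam0.ne', scaleAbout_capsuleFam hα]
  exact iInter_mono fun i =>
    scaleAbout_capsuleSeg_subset (hv i) (hdir i) hlam0 hlam1 (hzx i) (hzy i)

/-- **Expansion-Containment.** If the shrunken capsules
`C^λ(x, r)` and `C^λ(y, r)` overlap, then `C^λ(y, r) ⊆ C^{αλ}(x, r)` with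
`α = (3+λ)/(1-λ)`. -/
theorem capsule_expansion_containment {d n : ℕ} (hd : 1 ≤ d) (hn : 1 ≤ n)
    (a b v : Fin n → EuclideanSpace ℝ (Fin d))
    (hab : ∀ i, a i ≠ b i)
    (hv : ∀ i, ‖v i‖ = 1)
    (hdir : ∀ i, b i - a i = ‖b i - a i‖ • v i)
    (hdisj : ∀ i j, i ≠ j → Disjoint (segment ℝ (a i) (b i)) (segment ℝ (a j) (b j)))
    (r : ℝ) (hr : 0 < r) (lam : ℝ) (hlam0 : 0 < lam) (hlam1 : lam < 1)
    (x y : EuclideanSpace ℝ (Fin d))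
    (hmeet : (scaleAbout x lam (capsuleFam a b v x r) ∩
        scaleAbout y lam (capsuleFam a b v y r)).Nonempty) :
    scaleAbout y lam (capsuleFam a b v y r) ⊆
      scaleAbout x ((3 + lam) / (1 - lam) * lam) (capsuleFam a b v x r) :=
  capsule_expansion_containment_general a b v hv hdir r lam hlam0 hlam1 x y hmeet
end
end

section
/- For any x ∈ ℝᵈ and r > 0: (i) for every γ ≥ 1, C(x, γ·r) ⊆ C^γ(x, r); and (ii) for every 0 < λ ≤ 1, C^λ(x, r) ⊆ C(x, λ·r). -/
noncomputable section

open Metric Set MeasureTheory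
open scoped InnerProductSpace Classical

variable {d n : ℕ}

/-! Every piece of a capsule is a sublevel set `{y | N (y - x) ≤ max R D}` of a seminorm `N`
with a level `D ≥ 0` independent of the radius `R`. Scaling about `x` by `c ∈ [0, 1]` multiplies
`N (y - x)` by `c`, and `c * max R D ≤ max (c * R) D`, so it maps `C(x, R)` into `C(x, c R)`.
Part (i) is part (ii) for `c = γ⁻¹`, read backwards. -/

lemma mul_max_le_max_mul_of_le_one {c R D : ℝ} (hc0 : 0 ≤ c) (hc1 : c ≤ 1) (hD : 0 ≤ D) :
    c * max R D ≤ max (c * R) D := by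
  rw [mul_max_of_nonneg _ _ hc0]
  exact max_le_max le_rfl (mul_le_of_le_one_left hD hc1)

lemma homothety_sub_center {E : Type*} [AddCommGroup E] [Module ℝ E] (x y : E) (c : ℝ) :
    AffineMap.homothety x c y - x = c • (y - x) := by
  simp [AffineMap.homothety_apply]

lemma homothety_mem_capsuleSeg {a b v x y : EuclideanSpace ℝ (Fin d)} {R c : ℝ}
    (hc0 : 0 ≤ c) (hc1 : c ≤ 1) (hy : y ∈ capsuleSeg a b v x R) :
    AffineMap.homothety x c y ∈ capsuleSeg a b v x (c * R) := by
  have hball : ∀ {D : ℝ}, 0 ≤ D → y ∈ closedBall x (max R D) →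
      AffineMap.homothety x c y ∈ closedBall x (max (c * R) D) := by
    intro D hD hyD
    rw [mem_closedBall, dist_homothety_center, Real.norm_of_nonneg hc0, dist_comm]
    exact (mul_le_mul_of_nonneg_left (mem_closedBall.mp hyD) hc0).trans
      (mul_max_le_max_mul_of_le_one hc0 hc1 hD)
  have hdist : 0 ≤ infDist x (segment ℝ a b) := infDist_nonneg
  unfold capsuleSeg at hy ⊢
  split_ifs at hy ⊢
  · exact hball hdist hy
  · obtain ⟨hcyl, hy⟩ := hy
    refine ⟨?_, hball (le_min dist_nonneg dist_nonneg) hy⟩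
    have hperp : c • (y - x) - ⟪c • (y - x), v⟫_ℝ • v = c • ((y - x) - ⟪y - x, v⟫_ℝ • v) := by
      rw [real_inner_smul_left, mul_smul, ← smul_sub]
    change ‖_‖ ≤ _
    rw [homothety_sub_center, hperp, norm_smul, Real.norm_of_nonneg hc0]
    exact (mul_le_mul_of_nonneg_left hcyl hc0).trans
      (mul_max_le_max_mul_of_le_one hc0 hc1 hdist)

lemma scaleAbout_capsuleFam_subset (a b v : Fin n → EuclideanSpace ℝ (Fin d))
    (x : EuclideanSpace ℝ (Fin d)) {R c : ℝ} (hc0 : 0 ≤ c) (hc1 : c ≤ 1) :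
    scaleAbout x c (capsuleFam a b v x R) ⊆ capsuleFam a b v x (c * R) := by
  rintro _ ⟨y, hy, rfl⟩
  exact mem_iInter.mpr fun i => homothety_mem_capsuleSeg hc0 hc1 (mem_iInter.mp hy i)

lemma capsuleFam_subset_scaleAbout (a b v : Fin n → EuclideanSpace ℝ (Fin d))
    (x : EuclideanSpace ℝ (Fin d)) {R γ : ℝ} (hγ : 1 ≤ γ) :
    capsuleFam a b v x (γ * R) ⊆ scaleAbout x γ (capsuleFam a b v x R) := by
  have hγ0 : γ ≠ 0 := (zero_lt_one.trans_le hγ).ne'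
  intro y hy
  refine ⟨AffineMap.homothety x γ⁻¹ y, ?_, ?_⟩
  · have := scaleAbout_capsuleFam_subset a b v x (inv_nonneg.mpr (zero_le_one.trans hγ))
      (inv_le_one_of_one_le₀ hγ) (mem_image_of_mem _ hy)
    rwa [inv_mul_cancel_left₀ hγ0] at this
  · rw [← AffineMap.comp_apply, ← AffineMap.homothety_mul, mul_inv_cancel₀ hγ0,
      AffineMap.homothety_one, AffineMap.id_apply]

theorem capsule_radius_vs_scaling_general {d n : ℕ}
    (a b v : Fin n → EuclideanSpace ℝ (Fin d))
    (x : EuclideanSpace ℝ (Fin d)) (r : ℝ) :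
    (∀ gam : ℝ, 1 ≤ gam →
      capsuleFam a b v x (gam * r) ⊆ scaleAbout x gam (capsuleFam a b v x r)) ∧
    (∀ lam : ℝ, 0 < lam → lam ≤ 1 →
      scaleAbout x lam (capsuleFam a b v x r) ⊆ capsuleFam a b v x (lam * r)) :=
  ⟨fun _ hgam => capsuleFam_subset_scaleAbout a b v x hgam,
    fun _ hlam0 hlam1 => scaleAbout_capsuleFam_subset a b v x hlam0.le hlam1⟩

/-- (i) For `γ ≥ 1`, `C(x, γr) ⊆ C^γ(x, r)`; and
(ii) for `0 < λ ≤ 1`, `C^λ(x, r) ⊆ C(x, λr)`. -/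
theorem capsule_radius_vs_scaling {d n : ℕ} (hd : 1 ≤ d) (hn : 1 ≤ n)
    (a b v : Fin n → EuclideanSpace ℝ (Fin d))
    (hab : ∀ i, a i ≠ b i)
    (hv : ∀ i, ‖v i‖ = 1)
    (hdir : ∀ i, b i - a i = ‖b i - a i‖ • v i)
    (hdisj : ∀ i j, i ≠ j → Disjoint (segment ℝ (a i) (b i)) (segment ℝ (a j) (b j)))
    (x : EuclideanSpace ℝ (Fin d)) (r : ℝ) (hr : 0 < r) :
    (∀ gam : ℝ, 1 ≤ gam →
      capsuleFam a b v x (gam * r) ⊆ scaleAbout x gam (capsuleFam a b v x r)) ∧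
    (∀ lam : ℝ, 0 < lam → lam ≤ 1 →
      scaleAbout x lam (capsuleFam a b v x r) ⊆ capsuleFam a b v x (lam * r)) :=
  capsule_radius_vs_scaling_general a b v x r
end
end
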